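/- arXiv:1504.06513 — 2 statements merged into one kernel-verified Lean document; each statement's English description precedes it below -/
import Mathlib

section
/- (Bounds for Maurey's recursion.) Fix 0 < ε < 1/2 and let φ_n be Maurey's sequence on 𝕋^ℕ. Then for every n ≥ 1 and every w ∈ 𝕋^ℕ one has |φ_n(w)| < 1, and for every n ≥ 2, (1 − ε)(1 − |φ_{n−1}(w)|) ≤ 1 − |φ_n(w)|. -/
open MeasureTheory Function
open scoped ENNReal NNReal

noncomputable section

instance : Fact (0 < 2 * Real.pi) := ⟨by positivity⟩

/-- The circle `𝕋`, realized as the additive circle `ℝ / 2πℤ`. -/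
abbrev Torus : Type := AddCircle (2 * Real.pi)

/-- The normalized Haar probability measure `m` on the circle `𝕋`. -/
abbrev haarT : Measure Torus := AddCircle.haarAddCircle

/-- The canonical identification of `𝕋` with the unit circle in `ℂ`. -/
noncomputable def toC (ζ : Torus) : ℂ := (AddCircle.toCircle ζ : ℂ)

/-- `H¹₀(𝕋, X)`: Bochner-integrable `X`-valued functions on `𝕋` all of whose Fourier coefficients
`ĥ(n)`, `n ≤ 0`, vanish. -/
def MemH1Zero {X : Type} [NormedAddCommGroup X] [NormedSpace ℂ X] (h : Torus → X) : Prop :=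
  Integrable h haarT ∧ ∀ n : ℤ, n ≤ 0 → fourierCoeff h n = 0

/-- The countable torus product `𝕋^ℕ`. -/
abbrev TorusProd : Type := ℕ → Torus

/-- The normalized Haar probability measure `ℙ` on `𝕋^ℕ` (the product Haar measure). -/
noncomputable def haarTP : Measure TorusProd := MeasureTheory.Measure.addHaarMeasure ⊤

instance : IsProbabilityMeasure haarTP :=
  IsProbabilityMeasure.mk (MeasureTheory.Measure.addHaarMeasure_self (K₀ := ⊤))

/-- The filtration `(ℱ_n)` on `𝕋^ℕ` where `ℱ_n` is generated by the first `n` coordinates. -/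
noncomputable def coordFiltration : Filtration ℕ (inferInstance : MeasurableSpace TorusProd) where
  seq n := MeasurableSpace.comap (fun w : TorusProd => fun i : Fin n => w i) inferInstance
  mono' := by
    intro m n hmn
    have h : (fun w : TorusProd => fun i : Fin m => w i)
        = (fun (x : Fin n → Torus) (i : Fin m) => x (Fin.castLE hmn i))
            ∘ (fun w : TorusProd => fun i : Fin n => w i) := rfl
    simp only []
    rw [h, ← MeasurableSpace.comap_comp]
    exact MeasurableSpace.comap_mono
      ((measurable_pi_lambda _ fun i => measurable_pi_apply _).comap_le)
  le' := fun n => (measurable_pi_lambda _ fun i => measurable_pi_apply _).comap_le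

/-- An `X`-valued Hardy martingale on `𝕋^ℕ`: a martingale `F` with respect to the coordinate
filtration with `F 0 = 0` such that for each `k ≥ 1` and almost every `w`, the function
`y ↦ F_k(w_1, …, w_{k-1}, y) - F_{k-1}(w)` of the `k`-th coordinate belongs to `H¹₀(𝕋, X)`. -/
def IsHardyMartingale {X : Type} [NormedAddCommGroup X] [NormedSpace ℂ X] [CompleteSpace X]
    (F : ℕ → TorusProd → X) : Prop :=
  Martingale F coordFiltration haarTP ∧ F 0 = 0 ∧
  ∀ k : ℕ, 0 < k → ∀ᵐ w ∂haarTP,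
    MemH1Zero (fun y : Torus => F k (Function.update w (k - 1) y) - F (k - 1) w)


/-- **Maurey's sequence** `φ_n` on `𝕋^ℕ`, defined recursively by `φ_0 = 0`,
`φ_{n+1}(w) = φ_n(w) + ε (1 - |φ_n(w)|)² w_{n+1}` (coordinates indexed from `0`,
so that `φ_n` depends on the first `n` coordinates); in particular `φ_1(w) = ε w_1`. -/
noncomputable def maureySeq (ε : ℝ) : ℕ → TorusProd → ℂ
  | 0 => fun _ => 0
  | n + 1 => fun w =>
      maureySeq ε n w + (ε * (1 - ‖maureySeq ε n w‖) ^ 2) • toC (w n)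

/-! Writing `a = ‖φ_n(w)‖`, the triangle inequality gives
`1 - ‖φ_{n+1}(w)‖ ≥ (1 - a)(1 - ε(1 - a)) ≥ (1 - ε)(1 - a)`, so `1 - ‖φ_n(w)‖ ≥ (1 - ε)^n > 0`. -/

theorem one_sub_mul_one_sub_le_one_sub_add {ε a : ℝ} (hε : 0 ≤ ε) (ha0 : 0 ≤ a) (ha1 : a ≤ 1) :
    (1 - ε) * (1 - a) ≤ 1 - (a + ε * (1 - a) ^ 2) := by
  nlinarith [mul_nonneg (mul_nonneg hε ha0) (sub_nonneg.2 ha1)]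

theorem norm_toC (ζ : Torus) : ‖toC ζ‖ = 1 :=
  Circle.norm_coe _

theorem norm_maureySeq_succ_le {ε : ℝ} (hε : 0 ≤ ε) (n : ℕ) (w : TorusProd) :
    ‖maureySeq ε (n + 1) w‖ ≤ ‖maureySeq ε n w‖ + ε * (1 - ‖maureySeq ε n w‖) ^ 2 := by
  calc ‖maureySeq ε (n + 1) w‖
      ≤ ‖maureySeq ε n w‖ + ‖(ε * (1 - ‖maureySeq ε n w‖) ^ 2) • toC (w n)‖ :=
        norm_add_le _ _
    _ = ‖maureySeq ε n w‖ + ε * (1 - ‖maureySeq ε n w‖) ^ 2 := by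
        rw [norm_smul, norm_toC, mul_one, Real.norm_of_nonneg (by positivity)]

theorem one_sub_mul_one_sub_norm_maureySeq_le {ε : ℝ} (hε : 0 ≤ ε) {n : ℕ} {w : TorusProd}
    (h : ‖maureySeq ε n w‖ ≤ 1) :
    (1 - ε) * (1 - ‖maureySeq ε n w‖) ≤ 1 - ‖maureySeq ε (n + 1) w‖ :=
  (one_sub_mul_one_sub_le_one_sub_add hε (norm_nonneg _) h).trans
    (sub_le_sub_left (norm_maureySeq_succ_le hε n w) 1)

theorem norm_maureySeq_lt_one {ε : ℝ} (hε0 : 0 ≤ ε) (hε1 : ε < 1) (n : ℕ) (w : TorusProd) :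
    ‖maureySeq ε n w‖ < 1 := by
  induction n with
  | zero => simp [maureySeq]
  | succ n ih =>
    have hpos : 0 < (1 - ε) * (1 - ‖maureySeq ε n w‖) :=
      mul_pos (sub_pos.2 hε1) (sub_pos.2 ih)
    linarith [one_sub_mul_one_sub_norm_maureySeq_le hε0 ih.le]

/-- **Bounds for Maurey's recursion.** For `0 < ε < 1/2`: `|φ_n(w)| < 1` for all `n ≥ 1`, and
`(1 - ε)(1 - |φ_{n-1}(w)|) ≤ 1 - |φ_n(w)|` for all `n ≥ 2`. -/
theorem maurey_recursion_bounds (ε : ℝ) (hε0 : 0 < ε) (hε : ε < 1 / 2) :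
    (∀ n : ℕ, 1 ≤ n → ∀ w : TorusProd, ‖maureySeq ε n w‖ < 1) ∧
    (∀ n : ℕ, 2 ≤ n → ∀ w : TorusProd,
      (1 - ε) * (1 - ‖maureySeq ε (n - 1) w‖)
        ≤ 1 - ‖maureySeq ε n w‖) := by
  refine ⟨fun n _ w => norm_maureySeq_lt_one hε0.le (by linarith) n w, fun n hn w => ?_⟩
  obtain ⟨m, rfl⟩ : ∃ m, n = m + 1 := ⟨n - 1, by omega⟩
  rw [Nat.add_sub_cancel]
  exact one_sub_mul_one_sub_norm_maureySeq_le hε0.le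
    (norm_maureySeq_lt_one hε0.le (by linarith) m w).le

end
end

section
/- (Bourgain's cosine-integral estimate.) Let p, v : 𝕋 → ℝ be measurable functions such that 0 ≤ p(ζ) ≤ 1/2 for almost every ζ ∈ 𝕋 and ∫_𝕋 v² dm ≤ 4 ∫_𝕋 p dm. Then ∫_𝕋 (1 − p(ζ)) cos(v(ζ)) dm(ζ) ≥ 1 − 3 ∫_𝕋 p dm. -/
open MeasureTheory Function
open scoped ENNReal NNReal

noncomputable section

/-- **Bourgain's cosine-integral estimate.** If `0 ≤ p ≤ 1/2` a.e. and `∫ v² dm ≤ 4 ∫ p dm`,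
then `∫ (1 - p) cos v dm ≥ 1 - 3 ∫ p dm`. -/
theorem bourgain_cosine_integral_estimate
    (p v : Torus → ℝ) (hp : Measurable p) (hv : Measurable v)
    (hp_bounds : ∀ᵐ ζ ∂haarT, 0 ≤ p ζ ∧ p ζ ≤ 1 / 2)
    (hv2 : Integrable (fun ζ => v ζ ^ 2) haarT)
    (hbound : ∫ ζ, v ζ ^ 2 ∂haarT ≤ 4 * ∫ ζ, p ζ ∂haarT) :
    1 - 3 * ∫ ζ, p ζ ∂haarT ≤ ∫ ζ, (1 - p ζ) * Real.cos (v ζ) ∂haarT := by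
  have hpint : Integrable p haarT := by
    refine (integrable_const (1/2 : ℝ)).mono' hp.aestronglyMeasurable ?_
    filter_upwards [hp_bounds] with ζ ⟨h0, h1⟩
    rw [Real.norm_eq_abs, abs_of_nonneg h0]; exact h1
  have hfint : Integrable (fun ζ => (1 - p ζ) * Real.cos (v ζ)) haarT := by
    refine (integrable_const (1 : ℝ)).mono'
      ((hp.const_sub 1).mul (Real.measurable_cos.comp hv)).aestronglyMeasurable ?_
    filter_upwards [hp_bounds] with ζ ⟨h0, h1⟩
    have h1p : 0 ≤ 1 - p ζ := by linarith
    rw [Real.norm_eq_abs, abs_mul, abs_of_nonneg h1p]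
    calc (1 - p ζ) * |Real.cos (v ζ)| ≤ 1 * 1 :=
          mul_le_mul (by linarith) (Real.abs_cos_le_one _) (abs_nonneg _) one_pos.le
      _ = 1 := one_mul 1
  have hgint : Integrable (fun ζ => 1 - p ζ - v ζ ^ 2 / 2) haarT := by
    exact ((integrable_const (1:ℝ)).sub hpint).sub (hv2.div_const 2)
  have hmono : ∫ ζ, (1 - p ζ - v ζ ^ 2 / 2) ∂haarT
      ≤ ∫ ζ, (1 - p ζ) * Real.cos (v ζ) ∂haarT := by
    refine integral_mono_ae hgint hfint ?_
    filter_upwards [hp_bounds] with ζ ⟨h0, h1⟩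
    have h1p : 0 ≤ 1 - p ζ := by linarith
    have hc : 1 - v ζ ^ 2 / 2 ≤ Real.cos (v ζ) := Real.one_sub_sq_div_two_le_cos
    have := mul_le_mul_of_nonneg_left hc h1p
    nlinarith [sq_nonneg (v ζ), mul_nonneg h0 (sq_nonneg (v ζ))]
  have hcalc : ∫ ζ, (1 - p ζ - v ζ ^ 2 / 2) ∂haarT
      = 1 - ∫ ζ, p ζ ∂haarT - (∫ ζ, v ζ ^ 2 ∂haarT) / 2 := by
    have h1 : Integrable (fun ζ => 1 - p ζ) haarT := (integrable_const (1:ℝ)).sub hpint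
    rw [integral_sub h1 (hv2.div_const 2), integral_sub (integrable_const (1:ℝ)) hpint,
        integral_const, integral_div]
    simp
  linarith [hmono, hcalc.symm.le, hbound]

end
end
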